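/- arXiv:2104.01412 — 2 statements merged into one kernel-verified Lean document; each statement's English description precedes it below -/
import Mathlib

section
/- The map (α, β) ↦ (α/(α+β), αβ/((α+β)²(α+β+1))) from (0,∞)² onto the dome D = {(M,V) ∈ (0,1)² : V < M - M²} is a homeomorphism. -/
noncomputable def toMV (p : ℝ × ℝ) : ℝ × ℝ :=
  (p.1 / (p.1 + p.2), p.1 * p.2 / ((p.1 + p.2) ^ 2 * (p.1 + p.2 + 1)))

def Dome : Set (ℝ × ℝ) :=
  {q | q.1 ∈ Set.Ioo (0:ℝ) 1 ∧ q.2 ∈ Set.Ioo (0:ℝ) 1 ∧ q.2 < q.1 - q.1 ^ 2}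

/-!
Writing `s = α + β` and `m = α / s`, the map is `(m s, (1 - m) s) ↦ (m, m (1 - m) / (s + 1))`.
So `m` ranges over `(0, 1)` and, for fixed `m`, the second coordinate decreases from `m (1 - m)`
to `0` as `s` runs over `(0, ∞)`; solving `s + 1 = m (1 - m) / V` gives the rational inverse
`fromMV`, continuous on the dome since `V > 0` there.
-/

open Set

noncomputable def fromMV (q : ℝ × ℝ) : ℝ × ℝ :=
  (q.1 * (q.1 - q.1 ^ 2 - q.2) / q.2, (1 - q.1) * (q.1 - q.1 ^ 2 - q.2) / q.2)

lemma toMV_mul_one_sub_mul {m s : ℝ} (hs : s ≠ 0) :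
    toMV (m * s, (1 - m) * s) = (m, m * (1 - m) / (s + 1)) := by
  have hsum : m * s + (1 - m) * s = s := by ring
  simp only [toMV, hsum, Prod.mk.injEq]
  constructor
  · field_simp
  · rw [show m * s * ((1 - m) * s) = m * (1 - m) * s ^ 2 by ring, mul_comm (s ^ 2),
      mul_div_mul_right _ _ (pow_ne_zero 2 hs)]

lemma toMV_eq {a b : ℝ} (h : a + b ≠ 0) :
    toMV (a, b) = (a / (a + b), a / (a + b) * (1 - a / (a + b)) / (a + b + 1)) := by
  have hab : (a, b) = (a / (a + b) * (a + b), (1 - a / (a + b)) * (a + b)) := by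
    rw [Prod.mk.injEq]
    exact ⟨by field_simp, by field_simp; ring⟩
  conv_lhs => rw [hab]
  exact toMV_mul_one_sub_mul h

lemma mk_mem_dome {m s : ℝ} (hm : m ∈ Ioo 0 1) (hs : 0 < s) :
    (m, m * (1 - m) / (s + 1)) ∈ Dome := by
  obtain ⟨hm0, hm1⟩ := hm
  have hvar : 0 < m * (1 - m) := mul_pos hm0 (by linarith)
  have hlt : m * (1 - m) / (s + 1) < m * (1 - m) := div_lt_self hvar (by linarith)
  exact ⟨⟨hm0, hm1⟩, ⟨by positivity, by nlinarith⟩, by linarith⟩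

lemma fromMV_eq (q : ℝ × ℝ) :
    fromMV q = (q.1 * ((q.1 - q.1 ^ 2 - q.2) / q.2), (1 - q.1) * ((q.1 - q.1 ^ 2 - q.2) / q.2)) := by
  simp only [fromMV, mul_div_assoc]

lemma mapsTo_toMV : MapsTo toMV (Ioi 0 ×ˢ Ioi 0) Dome := by
  rintro ⟨a, b⟩ ⟨ha, hb⟩
  simp only [mem_Ioi] at ha hb
  have hs : 0 < a + b := by linarith
  rw [toMV_eq hs.ne']
  exact mk_mem_dome ⟨by positivity, (div_lt_one hs).2 (by linarith)⟩ hs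

lemma mapsTo_fromMV : MapsTo fromMV Dome (Ioi 0 ×ˢ Ioi 0) := by
  rintro ⟨M, V⟩ ⟨⟨hM0, hM1⟩, ⟨hV0, -⟩, hVM⟩
  have hW : 0 < M - M ^ 2 - V := by linarith
  have h1M : 0 < 1 - M := by linarith
  exact ⟨by simp only [fromMV, mem_Ioi]; positivity, by simp only [fromMV, mem_Ioi]; positivity⟩

lemma leftInvOn_fromMV_toMV : LeftInvOn fromMV toMV (Ioi 0 ×ˢ Ioi 0) := by
  rintro ⟨a, b⟩ ⟨ha, hb⟩
  simp only [mem_Ioi] at ha hb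
  simp only [fromMV, toMV, Prod.mk.injEq]
  constructor <;> (field_simp; ring)

lemma leftInvOn_toMV_fromMV : LeftInvOn toMV fromMV Dome := by
  rintro ⟨M, V⟩ ⟨⟨hM0, hM1⟩, ⟨hV0, -⟩, hVM⟩
  have hs : 0 < (M - M ^ 2 - V) / V := div_pos (by linarith) hV0
  have hs1 : (M - M ^ 2 - V) / V + 1 = M * (1 - M) / V := by field_simp; ring
  have hvar : M * (1 - M) ≠ 0 := (mul_pos hM0 (by linarith)).ne'
  rw [fromMV_eq, toMV_mul_one_sub_mul hs.ne', hs1, div_div_cancel₀ hvar]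

lemma continuousOn_toMV : ContinuousOn toMV (Ioi 0 ×ˢ Ioi 0) := by
  unfold toMV
  fun_prop (disch := rintro ⟨a, b⟩ ⟨ha, hb⟩; simp only [mem_Ioi] at ha hb; positivity)

lemma continuousOn_fromMV : ContinuousOn fromMV Dome := by
  unfold fromMV
  fun_prop (disch := rintro ⟨M, V⟩ ⟨-, ⟨hV0, -⟩, -⟩; exact hV0.ne')

noncomputable def toMVPartialHomeomorph : PartialHomeomorph (ℝ × ℝ) (ℝ × ℝ) where
  toFun := toMV
  invFun := fromMV
  source := Ioi 0 ×ˢ Ioi 0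
  target := Dome
  map_source' := mapsTo_toMV
  map_target' := mapsTo_fromMV
  left_inv' := leftInvOn_fromMV_toMV
  right_inv' := leftInvOn_toMV_fromMV
  continuousOn_toFun := continuousOn_toMV
  continuousOn_invFun := continuousOn_fromMV

theorem toMV_homeomorph :
    ∃ h : (Set.Ioi (0:ℝ) ×ˢ Set.Ioi (0:ℝ) : Set (ℝ × ℝ)) ≃ₜ Dome,
      ∀ p : (Set.Ioi (0:ℝ) ×ˢ Set.Ioi (0:ℝ) : Set (ℝ × ℝ)), (h p : ℝ × ℝ) = toMV p :=
  ⟨toMVPartialHomeomorph.toHomeomorphSourceTarget, fun _ => rfl⟩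
end

section
/- Let M ∈ (0,1) and V₁, V₂ ∈ (0, M - M²). Then V₁ ≤ V₂ if and only if F_{M,V₂} ⪯_ssd F_{M,V₁}, i.e., ∫₀ˣ F_{M,V₁}(t)dt ≤ ∫₀ˣ F_{M,V₂}(t)dt for all x ∈ [0,1]; thus Beta distributions with a common mean are totally ordered by second-order stochastic dominance according to their variance. -/
open MeasureTheory intervalIntegral

noncomputable def betaCDF (α β t : ℝ) : ℝ :=
  (∫ x in (0:ℝ)..t, x ^ (α - 1) * (1 - x) ^ (β - 1)) /
    ∫ x in (0:ℝ)..1, x ^ (α - 1) * (1 - x) ^ (β - 1)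

noncomputable def FMV (M V t : ℝ) : ℝ :=
  betaCDF (M * (M - M ^ 2 - V) / V) ((1 - M) * (M - M ^ 2 - V) / V) t

/-! For a fixed mean `M`, the Beta law of variance `V` has shape parameters `α = M ν` and
`β = (1 - M) ν` with `ν = (M - M² - V) / V`, so a larger variance means smaller shape parameters.
The ratio of the two densities is then a constant times `x ^ (α₂ - α₁) * (1 - x) ^ (β₂ - β₁)`,
which is log-convex; hence `f₂ < f₁` exactly on an interval, and `F₂ - F₁`, which vanishes at
`0` and `1`, changes sign once, downwards. The means agree, so `∫₀¹ (F₂ - F₁) = 0` as well, and the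
primitive `∫₀ˣ (F₂ - F₁)`, first increasing and then decreasing between two zeros, is nonnegative.
Conversely `∫₀¹ ∫₀ˣ F = E (1 - X)² / 2 = ((1 - M)² + V) / 2` is increasing in `V`. -/

open Set Real ProbabilityTheory

/-- `f` crosses zero at most once on `s`, and then downwards. -/
def SingleCrossing (f : ℝ → ℝ) (s : Set ℝ) : Prop :=
  ∀ x ∈ s, ∀ y ∈ s, x ≤ y → f x < 0 → f y ≤ 0

section SignChanges

variable {f f' : ℝ → ℝ} {a b : ℝ}

theorem exists_hasDerivAt_neg_of_lt (hab : a < b) (hf : ContinuousOn f (Icc a b))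
    (hff' : ∀ x ∈ Ioo a b, HasDerivAt f (f' x) x) (hlt : f b < f a) :
    ∃ c ∈ Ioo a b, f' c < 0 := by
  obtain ⟨c, hc, hslope⟩ := exists_hasDerivAt_eq_slope f f' hab hf hff'
  exact ⟨c, hc, hslope ▸ div_neg_of_neg_of_pos (sub_neg.2 hlt) (sub_pos.2 hab)⟩

theorem exists_hasDerivAt_pos_of_lt (hab : a < b) (hf : ContinuousOn f (Icc a b))
    (hff' : ∀ x ∈ Ioo a b, HasDerivAt f (f' x) x) (hlt : f a < f b) :
    ∃ c ∈ Ioo a b, 0 < f' c := by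
  obtain ⟨c, hc, hslope⟩ := exists_hasDerivAt_eq_slope f f' hab hf hff'
  exact ⟨c, hc, hslope ▸ div_pos (sub_pos.2 hlt) (sub_pos.2 hab)⟩

/-- A sign pattern `-, +` of `f` between its zeros at `a` and `b` would force the pattern
`-, +, -` on `f'`. -/
theorem singleCrossing_of_ordConnected_setOf_deriv_neg (hf : ContinuousOn f (Icc a b))
    (hff' : ∀ x ∈ Ioo a b, HasDerivAt f (f' x) x) (ha : f a = 0) (hb : f b = 0)
    (hneg : OrdConnected {x ∈ Ioo a b | f' x < 0}) : SingleCrossing f (Icc a b) := by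
  intro s hs t ht hst hfs
  by_contra! hft
  have has : a < s := hs.1.lt_of_ne (by rintro rfl; linarith)
  have htb : t < b := ht.2.lt_of_ne (by rintro rfl; linarith)
  have hst' : s < t := hst.lt_of_ne (by rintro rfl; linarith)
  obtain ⟨p, hp, hp'⟩ := exists_hasDerivAt_neg_of_lt has (hf.mono (Icc_subset_Icc le_rfl hs.2))
    (fun x hx => hff' x ⟨hx.1, hx.2.trans_le hs.2⟩) (by linarith)
  obtain ⟨q, hq, hq'⟩ := exists_hasDerivAt_pos_of_lt hst' (hf.mono (Icc_subset_Icc hs.1 ht.2))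
    (fun x hx => hff' x ⟨hs.1.trans_lt hx.1, hx.2.trans_le ht.2⟩) (by linarith)
  obtain ⟨r, hr, hr'⟩ := exists_hasDerivAt_neg_of_lt htb (hf.mono (Icc_subset_Icc ht.1 le_rfl))
    (fun x hx => hff' x ⟨ht.1.trans_lt hx.1, hx.2⟩) (by linarith)
  have hq_neg := hneg.out ⟨⟨hp.1, hp.2.trans_le hs.2⟩, hp'⟩ ⟨⟨ht.1.trans_lt hr.1, hr.2⟩, hr'⟩
    ⟨(hp.2.trans hq.1).le, (hq.2.trans hr.1).le⟩
  linarith [hq_neg.2]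

theorem nonneg_of_singleCrossing_deriv (hf : ContinuousOn f (Icc a b))
    (hff' : ∀ x ∈ Ioo a b, HasDerivAt f (f' x) x) (ha : f a = 0) (hb : f b = 0)
    (hsign : SingleCrossing f' (Icc a b)) {x : ℝ} (hx : x ∈ Icc a b) : 0 ≤ f x := by
  by_contra! hfx
  have hax : a < x := hx.1.lt_of_ne (by rintro rfl; linarith)
  have hxb : x < b := hx.2.lt_of_ne (by rintro rfl; linarith)
  obtain ⟨s, hs, hs'⟩ := exists_hasDerivAt_neg_of_lt hax (hf.mono (Icc_subset_Icc le_rfl hx.2))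
    (fun y hy => hff' y ⟨hy.1, hy.2.trans hxb⟩) (by linarith)
  obtain ⟨t, ht, ht'⟩ := exists_hasDerivAt_pos_of_lt hxb (hf.mono (Icc_subset_Icc hx.1 le_rfl))
    (fun y hy => hff' y ⟨hax.trans hy.1, hy.2⟩) (by linarith)
  have := hsign s ⟨hs.1.le, (hs.2.trans hxb).le⟩ t ⟨(hax.trans ht.1).le, ht.2.le⟩
    (hs.2.trans ht.1).le hs'
  linarith

end SignChanges

section Primitive

variable {g : ℝ → ℝ} {a b : ℝ}

theorem continuousOn_primitive_Icc (hab : a ≤ b) (hg : IntervalIntegrable g volume a b) :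
    ContinuousOn (fun t => ∫ s in a..t, g s) (Icc a b) := by
  simpa [uIcc_of_le hab] using continuousOn_primitive_interval' hg left_mem_uIcc

theorem hasDerivAt_primitive (hg : IntervalIntegrable g volume a b)
    (hgc : ContinuousOn g (Ioo a b)) {x : ℝ} (hx : x ∈ Ioo a b) :
    HasDerivAt (fun t => ∫ s in a..t, g s) (g x) x := by
  refine integral_hasDerivAt_right (hg.mono_set ?_)
    (hgc.stronglyMeasurableAtFilter isOpen_Ioo x hx) (hgc.continuousAt (Ioo_mem_nhds hx.1 hx.2))
  rw [uIcc_of_le hx.1.le, uIcc_of_le (hx.1.trans hx.2).le]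
  exact Icc_subset_Icc le_rfl hx.2.le

theorem integral_one_sub_pow_mul_eq {F : ℝ → ℝ} (k : ℕ) (hF : ContinuousOn F (Icc 0 1))
    (hF0 : F 0 = 0) (hFg : ∀ x ∈ Ioo 0 1, HasDerivAt F (g x) x)
    (hg : IntervalIntegrable g volume 0 1) :
    ∫ x in 0..1, (1 - x) ^ k * F x = ∫ x in 0..1, (1 - x) ^ (k + 1) / (k + 1) * g x := by
  have hv : ∀ x, HasDerivAt (fun y : ℝ => -((1 - y) ^ (k + 1) / (k + 1))) ((1 - x) ^ k) x := by
    intro x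
    have h1 : HasDerivAt (fun y : ℝ => 1 - y) (-1) x := by
      simpa using (hasDerivAt_id x).const_sub 1
    refine ((h1.fun_pow (k + 1)).div_const ((k : ℝ) + 1)).fun_neg.congr_deriv ?_
    rw [Nat.add_sub_cancel]
    push_cast
    field_simp
  have hparts := integral_mul_deriv_eq_deriv_mul_of_hasDerivAt (u := F) (a := 0) (b := 1)
    (by rwa [uIcc_of_le zero_le_one]) (by fun_prop) (by simpa using hFg) (fun x _ => hv x) hg
    ((by fun_prop : Continuous fun x : ℝ => (1 - x) ^ k).intervalIntegrable 0 1)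
  simp only [sub_self, zero_pow (Nat.succ_ne_zero k), zero_div, neg_zero, mul_zero, hF0,
    zero_mul, sub_zero, mul_neg, intervalIntegral.integral_neg, zero_sub, neg_neg] at hparts
  simpa only [mul_comm] using hparts

end Primitive

noncomputable def betaKernel (α β x : ℝ) : ℝ := x ^ (α - 1) * (1 - x) ^ (β - 1)

section BetaKernel

variable {α β x : ℝ}

theorem betaKernel_pos (hx : x ∈ Ioo 0 1) : 0 < betaKernel α β x :=
  mul_pos (rpow_pos_of_pos hx.1 _) (rpow_pos_of_pos (sub_pos.2 hx.2) _)

theorem continuousOn_betaKernel : ContinuousOn (betaKernel α β) (Ioo 0 1) := fun _ hx =>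
  ((continuousAt_id.rpow_const (Or.inl hx.1.ne')).mul
    ((continuousAt_const.sub continuousAt_id).rpow_const
      (Or.inl (sub_pos.2 hx.2).ne'))).continuousWithinAt

theorem log_betaKernel (hx : x ∈ Ioo 0 1) :
    log (betaKernel α β x) = (α - 1) * log x + (β - 1) * log (1 - x) := by
  rw [betaKernel, log_mul (rpow_pos_of_pos hx.1 _).ne' (rpow_pos_of_pos (sub_pos.2 hx.2) _).ne',
    log_rpow hx.1, log_rpow (sub_pos.2 hx.2)]

theorem integral_betaKernel (hα : 0 < α) (hβ : 0 < β) :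
    ∫ x in 0..1, betaKernel α β x = beta α β := by
  have hC : ∫ x in (0:ℝ)..1, ((x : ℂ) ^ ((α : ℂ) - 1) * (1 - (x : ℂ)) ^ ((β : ℂ) - 1)) =
      ∫ x in (0:ℝ)..1, ((betaKernel α β x : ℝ) : ℂ) := by
    refine integral_congr fun x hx => ?_
    rw [uIcc_of_le zero_le_one] at hx
    rw [betaKernel, Complex.ofReal_mul, Complex.ofReal_cpow hx.1,
      Complex.ofReal_cpow (sub_nonneg.2 hx.2)]
    push_cast
    rfl
  rw [beta_eq_betaIntegralReal α β hα hβ, Complex.betaIntegral, hC,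
    intervalIntegral.integral_ofReal, Complex.ofReal_re]

theorem intervalIntegrable_betaKernel (hα : 0 < α) (hβ : 0 < β) :
    IntervalIntegrable (betaKernel α β) volume 0 1 :=
  intervalIntegrable_of_integral_ne_zero (integral_betaKernel hα hβ ▸ (beta_pos hα hβ).ne')

theorem one_sub_pow_mul_betaKernel (hβ : 0 < β) (k : ℕ) (hx : x ∈ Icc 0 1) :
    (1 - x) ^ k * betaKernel α β x = betaKernel α (β + k) x := by
  rcases k.eq_zero_or_pos with rfl | hk
  · simp
  have hk' : (1 : ℝ) ≤ k := by exact_mod_cast hk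
  rw [betaKernel, betaKernel, add_sub_right_comm,
    rpow_add' (sub_nonneg.2 hx.2) (by linarith : β - 1 + k ≠ 0), rpow_natCast]
  ring

theorem integral_one_sub_pow_mul_betaKernel (hα : 0 < α) (hβ : 0 < β) (k : ℕ) :
    ∫ x in 0..1, (1 - x) ^ k * betaKernel α β x = beta α (β + k) := by
  rw [← integral_betaKernel hα (by positivity)]
  refine integral_congr fun x hx => ?_
  exact one_sub_pow_mul_betaKernel hβ k (by rwa [uIcc_of_le zero_le_one] at hx)

end BetaKernel

theorem ProbabilityTheory.beta_add_one_right {α β : ℝ} (hα : 0 < α) (hβ : 0 < β) :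
    beta α (β + 1) = β / (α + β) * beta α β := by
  rw [beta, beta, ← add_assoc, Gamma_add_one hβ.ne', Gamma_add_one (by positivity)]
  have := Gamma_pos_of_pos (add_pos hα hβ)
  field_simp

section BetaCDF

variable {α β : ℝ}

theorem betaCDF_eq (hα : 0 < α) (hβ : 0 < β) (t : ℝ) :
    betaCDF α β t = (∫ x in 0..t, betaKernel α β x) / beta α β := by
  rw [← integral_betaKernel hα hβ]
  rfl

theorem continuousOn_betaCDF (hα : 0 < α) (hβ : 0 < β) :
    ContinuousOn (betaCDF α β) (Icc 0 1) := by
  simp_rw [funext (betaCDF_eq hα hβ)]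
  exact (continuousOn_primitive_Icc zero_le_one (intervalIntegrable_betaKernel hα hβ)).div_const _

theorem betaCDF_zero (α β : ℝ) : betaCDF α β 0 = 0 := by
  simp [betaCDF]

theorem betaCDF_one (hα : 0 < α) (hβ : 0 < β) : betaCDF α β 1 = 1 := by
  rw [betaCDF_eq hα hβ, integral_betaKernel hα hβ, div_self (beta_pos hα hβ).ne']

theorem hasDerivAt_betaCDF (hα : 0 < α) (hβ : 0 < β) {x : ℝ} (hx : x ∈ Ioo 0 1) :
    HasDerivAt (betaCDF α β) (betaKernel α β x / beta α β) x := by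
  simp_rw [funext (betaCDF_eq hα hβ)]
  exact (hasDerivAt_primitive (intervalIntegrable_betaKernel hα hβ) continuousOn_betaKernel
    hx).div_const _

theorem integral_one_sub_pow_mul_betaCDF (hα : 0 < α) (hβ : 0 < β) (k : ℕ) :
    ∫ x in 0..1, (1 - x) ^ k * betaCDF α β x =
      beta α (β + (k + 1)) / ((k + 1) * beta α β) := by
  rw [integral_one_sub_pow_mul_eq k (continuousOn_betaCDF hα hβ) (betaCDF_zero α β)
    (fun x hx => hasDerivAt_betaCDF hα hβ hx)
    ((intervalIntegrable_betaKernel hα hβ).div_const _)]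
  have hmoment := integral_one_sub_pow_mul_betaKernel hα hβ (k + 1)
  push_cast at hmoment
  rw [← hmoment, ← intervalIntegral.integral_div]
  refine integral_congr fun x _ => ?_
  field_simp

theorem integral_betaCDF (hα : 0 < α) (hβ : 0 < β) :
    ∫ t in 0..1, betaCDF α β t = β / (α + β) := by
  have hmoment := integral_one_sub_pow_mul_betaCDF hα hβ 0
  simp only [pow_zero, one_mul, CharP.cast_eq_zero, zero_add] at hmoment
  rw [hmoment, beta_add_one_right hα hβ]
  have := (beta_pos hα hβ).ne'
  field_simp

theorem integral_integral_betaCDF (hα : 0 < α) (hβ : 0 < β) :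
    ∫ x in 0..1, ∫ t in 0..x, betaCDF α β t = β * (β + 1) / (2 * (α + β) * (α + β + 1)) := by
  have hF := (continuousOn_betaCDF hα hβ).intervalIntegrable_of_Icc (μ := volume) zero_le_one
  have hparts := integral_one_sub_pow_mul_eq 0 (continuousOn_primitive_Icc zero_le_one hF)
    integral_same (fun x hx => hasDerivAt_primitive hF
      ((continuousOn_betaCDF hα hβ).mono Ioo_subset_Icc_self) hx) hF
  have hmoment := integral_one_sub_pow_mul_betaCDF hα hβ 1
  simp only [pow_zero, one_mul, CharP.cast_eq_zero, zero_add, div_one, pow_one,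
    Nat.cast_one] at hparts hmoment
  rw [hparts, hmoment, one_add_one_eq_two, show β + 2 = β + 1 + 1 by ring,
    beta_add_one_right hα (by positivity), beta_add_one_right hα hβ]
  have := (beta_pos hα hβ).ne'
  field_simp
  ring

end BetaCDF

theorem convexOn_mul_log_add_mul_log_one_sub {p q : ℝ} (hp : p ≤ 0) (hq : q ≤ 0) :
    ConvexOn ℝ (Ioo 0 1) fun x => p * log x + q * log (1 - x) := by
  have hlog : ConcaveOn ℝ (Ioo 0 1) log :=
    strictConcaveOn_log_Ioi.concaveOn.subset Ioo_subset_Ioi_self (convex_Ioo 0 1)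
  have hlog' : ConcaveOn ℝ (Ioo 0 1) fun x => log (1 - x) := by
    refine ((strictConcaveOn_log_Ioi.concaveOn.comp_affineMap
      (AffineMap.lineMap (1 : ℝ) 0)).subset (fun x hx => ?_) (convex_Ioo 0 1)).congr fun x _ => ?_
    · simp [AffineMap.lineMap_apply_ring', hx.2]
    · simp [AffineMap.lineMap_apply_ring', neg_add_eq_sub]
  refine ((hlog.smul (neg_nonneg.2 hp)).neg.add (hlog'.smul (neg_nonneg.2 hq)).neg).congr
    fun x _ => ?_
  simp

/-- The likelihood ratio of two Beta densities is a constant times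
`x ^ (α₂ - α₁) * (1 - x) ^ (β₂ - β₁)`, which is log-convex when both exponents are nonpositive. -/
theorem ordConnected_setOf_betaKernel_div_sub_neg {α₁ β₁ α₂ β₂ c₁ c₂ : ℝ} (hα : α₂ ≤ α₁)
    (hβ : β₂ ≤ β₁) (hc₁ : 0 < c₁) (hc₂ : 0 < c₂) :
    OrdConnected {x ∈ Ioo 0 1 | betaKernel α₂ β₂ x / c₂ - betaKernel α₁ β₁ x / c₁ < 0} := by
  have hconv := (convexOn_mul_log_add_mul_log_one_sub (sub_nonpos.2 hα)
    (sub_nonpos.2 hβ)).convex_lt (log c₂ - log c₁)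
  suffices hset : {x ∈ Ioo 0 1 | betaKernel α₂ β₂ x / c₂ - betaKernel α₁ β₁ x / c₁ < 0} =
      {x ∈ Ioo 0 1 | (α₂ - α₁) * log x + (β₂ - β₁) * log (1 - x) < log c₂ - log c₁} by
    rw [hset]
    exact hconv.ordConnected
  ext x
  refine and_congr_right fun hx => ?_
  have hk₁ := betaKernel_pos (α := α₁) (β := β₁) hx
  have hk₂ := betaKernel_pos (α := α₂) (β := β₂) hx
  rw [sub_neg, ← log_lt_log_iff (div_pos hk₂ hc₂) (div_pos hk₁ hc₁), log_div hk₂.ne' hc₂.ne',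
    log_div hk₁.ne' hc₁.ne', log_betaKernel hx, log_betaKernel hx]
  constructor <;> intro h <;> linarith

theorem integral_betaCDF_le_of_le {α₁ β₁ α₂ β₂ : ℝ} (hα₂ : 0 < α₂) (hβ₂ : 0 < β₂)
    (hα : α₂ ≤ α₁) (hβ : β₂ ≤ β₁)
    (hmean : ∫ t in 0..1, betaCDF α₁ β₁ t = ∫ t in 0..1, betaCDF α₂ β₂ t)
    {x : ℝ} (hx : x ∈ Icc 0 1) :
    ∫ t in 0..x, betaCDF α₁ β₁ t ≤ ∫ t in 0..x, betaCDF α₂ β₂ t := by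
  have hα₁ := hα₂.trans_le hα
  have hβ₁ := hβ₂.trans_le hβ
  have hF₁ := continuousOn_betaCDF hα₁ hβ₁
  have hF₂ := continuousOn_betaCDF hα₂ hβ₂
  have hdiff : ContinuousOn (fun t => betaCDF α₂ β₂ t - betaCDF α₁ β₁ t) (Icc 0 1) :=
    hF₂.sub hF₁
  have hcross := singleCrossing_of_ordConnected_setOf_deriv_neg hdiff
    (fun x hx => (hasDerivAt_betaCDF hα₂ hβ₂ hx).sub (hasDerivAt_betaCDF hα₁ hβ₁ hx))
    (by simp [betaCDF_zero]) (by simp [betaCDF_one hα₁ hβ₁, betaCDF_one hα₂ hβ₂])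
    (ordConnected_setOf_betaKernel_div_sub_neg hα hβ (beta_pos hα₁ hβ₁) (beta_pos hα₂ hβ₂))
  have hint₁ := hF₁.intervalIntegrable_of_Icc (μ := volume) zero_le_one
  have hint₂ := hF₂.intervalIntegrable_of_Icc (μ := volume) zero_le_one
  have hint := hint₂.sub hint₁
  have hnonneg := nonneg_of_singleCrossing_deriv (continuousOn_primitive_Icc zero_le_one hint)
    (fun x hx => hasDerivAt_primitive hint (hdiff.mono Ioo_subset_Icc_self) hx) integral_same
    (by rw [integral_sub hint₂ hint₁, hmean, sub_self]) hcross hx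
  have hsub : uIcc 0 x ⊆ uIcc 0 1 :=
    uIcc_subset_uIcc left_mem_uIcc (by rwa [uIcc_of_le zero_le_one])
  rw [integral_sub (hint₂.mono_set hsub) (hint₁.mono_set hsub)] at hnonneg
  linarith

theorem mul_sub_div_le_mul_sub_div {c K V₁ V₂ : ℝ} (hc : 0 ≤ c) (hK : 0 ≤ K) (hV₁ : 0 < V₁)
    (hV : V₁ ≤ V₂) : c * (K - V₂) / V₂ ≤ c * (K - V₁) / V₁ := by
  rw [div_le_div_iff₀ (hV₁.trans_le hV) hV₁]
  nlinarith [mul_nonneg (mul_nonneg hc hK) (sub_nonneg.2 hV)]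

section MeanVariance

variable {M V : ℝ}

theorem FMV_shape_pos (hM : M ∈ Ioo 0 1) (hV : V ∈ Ioo 0 (M - M ^ 2)) :
    0 < M * (M - M ^ 2 - V) / V ∧ 0 < (1 - M) * (M - M ^ 2 - V) / V :=
  ⟨div_pos (mul_pos hM.1 (sub_pos.2 hV.2)) hV.1,
    div_pos (mul_pos (sub_pos.2 hM.2) (sub_pos.2 hV.2)) hV.1⟩

theorem intervalIntegrable_integral_FMV (hM : M ∈ Ioo 0 1) (hV : V ∈ Ioo 0 (M - M ^ 2)) :
    IntervalIntegrable (fun x => ∫ t in 0..x, FMV M V t) volume 0 1 :=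
  (continuousOn_primitive_Icc zero_le_one ((continuousOn_betaCDF (FMV_shape_pos hM hV).1
    (FMV_shape_pos hM hV).2).intervalIntegrable_of_Icc zero_le_one)).intervalIntegrable_of_Icc
    zero_le_one

theorem integral_FMV (hM : M ∈ Ioo 0 1) (hV : V ∈ Ioo 0 (M - M ^ 2)) :
    ∫ t in 0..1, FMV M V t = 1 - M := by
  obtain ⟨ha, hb⟩ := FMV_shape_pos hM hV
  unfold FMV
  rw [integral_betaCDF ha hb]
  have := hV.1
  have hs := sub_pos.2 hV.2
  generalize M - M ^ 2 - V = s at hs ⊢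
  field_simp
  ring

theorem integral_integral_FMV (hM : M ∈ Ioo 0 1) (hV : V ∈ Ioo 0 (M - M ^ 2)) :
    ∫ x in 0..1, ∫ t in 0..x, FMV M V t = ((1 - M) ^ 2 + V) / 2 := by
  obtain ⟨ha, hb⟩ := FMV_shape_pos hM hV
  unfold FMV
  rw [integral_integral_betaCDF ha hb]
  have := hV.1
  have := hM.1
  have := sub_pos.2 hM.2
  have hs := sub_pos.2 hV.2
  have hsum : M * (M - M ^ 2 - V) / V + (1 - M) * (M - M ^ 2 - V) / V = (M - M ^ 2 - V) / V := by
    ring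
  have hsum1 : (M - M ^ 2 - V) / V + 1 = M * (1 - M) / V := by
    field_simp
    ring
  rw [hsum, hsum1]
  generalize hs_def : M - M ^ 2 - V = s at hs ⊢
  field_simp
  subst hs_def
  ring

end MeanVariance

theorem FMV_ssd_iff_variance (M V₁ V₂ : ℝ) (hM : M ∈ Set.Ioo (0:ℝ) 1)
    (hV₁ : V₁ ∈ Set.Ioo (0:ℝ) (M - M ^ 2)) (hV₂ : V₂ ∈ Set.Ioo (0:ℝ) (M - M ^ 2)) :
    V₁ ≤ V₂ ↔
      ∀ x ∈ Set.Icc (0:ℝ) 1,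
        (∫ t in (0:ℝ)..x, FMV M V₁ t) ≤ ∫ t in (0:ℝ)..x, FMV M V₂ t := by
  obtain ⟨ha₂, hb₂⟩ := FMV_shape_pos hM hV₂
  have hMM : 0 ≤ M - M ^ 2 := hV₁.1.le.trans hV₁.2.le
  constructor
  · intro hV x hx
    exact integral_betaCDF_le_of_le ha₂ hb₂ (mul_sub_div_le_mul_sub_div hM.1.le hMM hV₁.1 hV)
      (mul_sub_div_le_mul_sub_div (sub_pos.2 hM.2).le hMM hV₁.1 hV)
      ((integral_FMV hM hV₁).trans (integral_FMV hM hV₂).symm) hx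
  · intro hssd
    have hmono := integral_mono_on zero_le_one (intervalIntegrable_integral_FMV hM hV₁)
      (intervalIntegrable_integral_FMV hM hV₂) hssd
    rw [integral_integral_FMV hM hV₁, integral_integral_FMV hM hV₂] at hmono
    linarith
end
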